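/- arXiv:2202.06141 — 3 statements merged into one kernel-verified Lean document; each statement's English description precedes it below -/
import Mathlib

section
/- Assume κ > β + √d·α/2. Then for all w in the closed l∞-ball B̄_β, the gradient of the smoothed function satisfies ∇f_α(w) ∈ closure(convexHull{∇f(x) : x ∈ B̄(w, √d·α/2) and f is differentiable at x}), where B̄(w,r) denotes the closed Euclidean ball of radius r centered at w. -/
/-! The expectation `f` is Lipschitz on the box `B̄_κ` with constant `E[L₀]`, so it coincides
there with a globally Lipschitz function `g`. For `z` near `w` the smoothing only evaluates `f`
on `z + B̄_{α/2} ⊆ B̄_κ`, hence `f_α = g_α` near `w`. By Rademacher's theorem and dominated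
convergence, `∇g_α(w) = E[∇g(w + u)]`, an average of gradients `∇g(w + u) = ∇f(w + u)` at points
with `‖u‖ ≤ √d·α/2`; such an average lies in the closed convex hull of its values. -/

open MeasureTheory Filter
open scoped Classical BigOperators

noncomputable section

/-- The closed `l∞`-ball of radius `r` centered at `0` in `ℝ^d`. -/
def Binf (d : ℕ) (r : ℝ) : Set (EuclideanSpace ℝ (Fin d)) := {z | ∀ i, |z i| ≤ r}

/-- The uniform probability distribution on the closed `l∞`-ball of radius `r` in `ℝ^d`. -/
def unifMeas (d : ℕ) (r : ℝ) : Measure (EuclideanSpace ℝ (Fin d)) :=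
  (volume (Binf d r))⁻¹ • volume.restrict (Binf d r)

/-- The point `w + u` with its `i`-th coordinate replaced by `w i + s`. -/
def shiftPt {d : ℕ} (s : ℝ) (w u : EuclideanSpace ℝ (Fin d)) (i : Fin d) :
    EuclideanSpace ℝ (Fin d) :=
  w + u + (s - u i) • EuclideanSpace.single i (1 : ℝ)

/-- The finite difference `df_i(w, u_{∖i})` of a function `f : ℝ^d → ℝ`. -/
def dfFD {d : ℕ} (α : ℝ) (f : EuclideanSpace ℝ (Fin d) → ℝ)
    (i : Fin d) (w u : EuclideanSpace ℝ (Fin d)) : ℝ :=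
  f (shiftPt (α / 2) w u i) - f (shiftPt (-(α / 2)) w u i)

/-- The finite-difference vector `dF(w,u,ξ)` whose `i`-th component is
`F(…, w_i + α/2, …, ξ) − F(…, w_i − α/2, …, ξ)`. -/
def dFvec {d p : ℕ} (α : ℝ)
    (F : EuclideanSpace ℝ (Fin d) → EuclideanSpace ℝ (Fin p) → ℝ)
    (w u : EuclideanSpace ℝ (Fin d)) (ξ : EuclideanSpace ℝ (Fin p)) :
    EuclideanSpace ℝ (Fin d) :=
  ∑ i : Fin d,
    (F (shiftPt (α / 2) w u i) ξ - F (shiftPt (-(α / 2)) w u i) ξ) • EuclideanSpace.single i (1 : ℝ)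

/-- `f(w) := E[F(w,ξ)]`. -/
def fbar {d p : ℕ} (μξ : Measure (EuclideanSpace ℝ (Fin p)))
    (F : EuclideanSpace ℝ (Fin d) → EuclideanSpace ℝ (Fin p) → ℝ)
    (w : EuclideanSpace ℝ (Fin d)) : ℝ := ∫ ξ, F w ξ ∂μξ

/-- The randomized smoothing `f_α(w) := E[f(w+u)]`, `u` uniform on `B̄_{α/2}`. -/
def smoothed {d : ℕ} (α : ℝ) (f : EuclideanSpace ℝ (Fin d) → ℝ)
    (w : EuclideanSpace ℝ (Fin d)) : ℝ := ∫ u, f (w + u) ∂(unifMeas d (α / 2))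

open ProbabilityTheory
open scoped NNReal Topology

section Smoothing

variable {E : Type*} [NormedAddCommGroup E] [InnerProductSpace ℝ E] [FiniteDimensional ℝ E]
  [MeasurableSpace E] [BorelSpace E] {μ : Measure E} [μ.IsAddHaarMeasure]

variable {g : E → ℝ} {K : ℝ≥0} {ν : Measure E}

theorem LipschitzWith.ae_differentiableAt_add (hg : LipschitzWith K g) (hν : ν ≪ μ) (w : E) :
    ∀ᵐ u ∂ν, DifferentiableAt ℝ g (w + u) :=
  hν.ae_le <|
    (measurePreserving_add_left μ w).quasiMeasurePreserving.ae (hg.ae_differentiableAt (μ := μ))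

theorem LipschitzWith.hasGradientAt_integral_comp_add [IsFiniteMeasure ν]
    (hg : LipschitzWith K g) (hν : ν ≪ μ) {w : E} (hint : Integrable (fun u ↦ g (w + u)) ν) :
    Integrable (fun u ↦ gradient g (w + u)) ν ∧
      HasGradientAt (fun z ↦ ∫ u, g (z + u) ∂ν) (∫ u, gradient g (w + u) ∂ν) w := by
  have hlip : ∀ u, LipschitzWith K (fun z ↦ g (z + u)) := fun u ↦
    hg.comp (isometry_add_right u).lipschitz |>.weaken (by simp)
  obtain ⟨hfderiv_int, hderiv⟩ := hasFDerivAt_integral_of_dominated_loc_of_lip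
    (F := fun z u ↦ g (z + u)) (s := Set.univ) (bound := fun _ ↦ (K : ℝ)) univ_mem
    (Eventually.of_forall fun z ↦
      (hg.continuous.comp (continuous_const_add z)).aestronglyMeasurable)
    hint ((measurable_fderiv ℝ g).comp (measurable_const_add w)).aestronglyMeasurable
    (ae_of_all _ fun u ↦ by simpa using hlip u) (integrable_const _)
    ((hg.ae_differentiableAt_add hν w).mono fun u h ↦
      (hasFDerivAt_comp_add_right u).2 h.hasFDerivAt)
  set toDualSymm :=
    (InnerProductSpace.toDual ℝ E).symm.toContinuousLinearEquiv.toContinuousLinearMap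
  have hgrad : ∫ u, gradient g (w + u) ∂ν = toDualSymm (∫ u, fderiv ℝ g (w + u) ∂ν) :=
    toDualSymm.integral_comp_commSL (fun _ _ ↦ by simp) hfderiv_int
  refine ⟨toDualSymm.integrable_comp hfderiv_int, ?_⟩
  rw [hasGradientAt_iff_hasFDerivAt, hgrad]
  simpa [toDualSymm] using hderiv

end Smoothing

theorem isClosed_Binf (d : ℕ) (r : ℝ) : IsClosed (Binf d r) := by
  simp only [Binf, Set.ofPred_forall]
  exact isClosed_iInter fun i ↦ isClosed_le (by fun_prop) continuous_const

theorem mem_Binf_of_norm_le {d : ℕ} {r : ℝ} {u : EuclideanSpace ℝ (Fin d)} (hu : ‖u‖ ≤ r) :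
    u ∈ Binf d r :=
  fun i ↦ (PiLp.norm_apply_le u i).trans hu

theorem add_mem_Binf {d : ℕ} {a b : ℝ} {x y : EuclideanSpace ℝ (Fin d)} (hx : x ∈ Binf d a)
    (hy : y ∈ Binf d b) : x + y ∈ Binf d (a + b) :=
  fun i ↦ (abs_add_le (x i) (y i)).trans (add_le_add (hx i) (hy i))

theorem Binf_mem_nhds {d : ℕ} {r s : ℝ} {x : EuclideanSpace ℝ (Fin d)} (hx : x ∈ Binf d r)
    (hrs : r < s) : Binf d s ∈ 𝓝 x := by
  filter_upwards [Metric.closedBall_mem_nhds x (sub_pos.2 hrs)] with y hy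
  simpa using add_mem_Binf hx (mem_Binf_of_norm_le (mem_closedBall_iff_norm.1 hy))

theorem norm_le_of_mem_Binf {d : ℕ} {r : ℝ} {u : EuclideanSpace ℝ (Fin d)} (hr : 0 ≤ r)
    (hu : u ∈ Binf d r) : ‖u‖ ≤ √d * r := by
  have hsum : ∑ i, ‖u i‖ ^ 2 ≤ d * r ^ 2 := by
    simpa using Finset.sum_le_card_nsmul Finset.univ (fun i ↦ ‖u i‖ ^ 2) (r ^ 2) fun i _ ↦
      pow_le_pow_left₀ (norm_nonneg _) (hu i) 2
  rw [EuclideanSpace.norm_eq, ← Real.sqrt_sq hr, ← Real.sqrt_mul d.cast_nonneg]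
  exact Real.sqrt_le_sqrt hsum

theorem isCompact_Binf (d : ℕ) {r : ℝ} (hr : 0 ≤ r) : IsCompact (Binf d r) :=
  (isCompact_closedBall 0 (√d * r)).of_isClosed_subset (isClosed_Binf d r) fun _ hu ↦
    mem_closedBall_zero_iff.2 (norm_le_of_mem_Binf hr hu)

theorem volume_Binf_pos (d : ℕ) {r : ℝ} (hr : 0 < r) : 0 < volume (Binf d r) :=
  (Metric.measure_ball_pos volume 0 hr).trans_le <| measure_mono fun _ hu ↦
    mem_Binf_of_norm_le (mem_ball_zero_iff.1 hu).le

-- `unifMeas d r` is definitionally the conditional measure `volume[|Binf d r]`.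
theorem unifMeas_absolutelyContinuous (d : ℕ) (r : ℝ) : unifMeas d r ≪ volume :=
  cond_absolutelyContinuous

theorem isProbabilityMeasure_unifMeas (d : ℕ) {r : ℝ} (hr : 0 < r) :
    IsProbabilityMeasure (unifMeas d r) :=
  cond_isProbabilityMeasure_of_finite (volume_Binf_pos d hr).ne'
    (isCompact_Binf d hr.le).measure_lt_top.ne

theorem ae_mem_unifMeas (d : ℕ) (r : ℝ) : ∀ᵐ u ∂unifMeas d r, u ∈ Binf d r :=
  ae_cond_mem (isClosed_Binf d r).measurableSet

theorem integrable_unifMeas_of_continuous {d : ℕ} {r : ℝ} (hr : 0 < r)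
    {h : EuclideanSpace ℝ (Fin d) → ℝ} (hc : Continuous h) : Integrable h (unifMeas d r) :=
  (hc.continuousOn.integrableOn_compact (isCompact_Binf d hr.le)).smul_measure
    (ENNReal.inv_ne_top.2 (volume_Binf_pos d hr).ne')

theorem lipschitzOnWith_fbar {d p : ℕ} {μξ : Measure (EuclideanSpace ℝ (Fin p))}
    {F : EuclideanSpace ℝ (Fin d) → EuclideanSpace ℝ (Fin p) → ℝ}
    {s : Set (EuclideanSpace ℝ (Fin d))} {L0 : EuclideanSpace ℝ (Fin p) → ℝ}
    (hL0 : Integrable L0 μξ)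
    (hlip : ∀ᵐ ξ ∂μξ, ∀ w ∈ s, ∀ w' ∈ s, |F w ξ - F w' ξ| ≤ L0 ξ * ‖w - w'‖)
    (hFint : ∀ w ∈ s, Integrable (fun ξ ↦ F w ξ) μξ) :
    LipschitzOnWith (∫ ξ, L0 ξ ∂μξ).toNNReal (fbar μξ F) s := by
  refine LipschitzOnWith.of_dist_le' fun x hx y hy ↦ ?_
  rw [dist_eq_norm, fbar, fbar, ← integral_sub (hFint x hx) (hFint y hy), dist_eq_norm,
    ← integral_mul_const]
  exact norm_integral_le_of_norm_le (hL0.mul_const _)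
    (hlip.mono fun ξ h ↦ h x hx y hy)

theorem smoothed_gradient_mem_clarke_eps_subdifferential_general
    (d p : ℕ) (α β κ : ℝ) (hα : 0 < α)
    (hκ : β + Real.sqrt d * (α / 2) < κ)
    (μξ : Measure (EuclideanSpace ℝ (Fin p))) [IsProbabilityMeasure μξ]
    (F : EuclideanSpace ℝ (Fin d) → EuclideanSpace ℝ (Fin p) → ℝ)
    (L0 : EuclideanSpace ℝ (Fin p) → ℝ) (hL0meas : Measurable L0)
    (hL0sq : Integrable (fun ξ => (L0 ξ) ^ 2) μξ)
    (hlip : ∀ᵐ ξ ∂μξ, ∀ w ∈ Binf d κ, ∀ w' ∈ Binf d κ,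
      |F w ξ - F w' ξ| ≤ L0 ξ * ‖w - w'‖)
    (hFint : ∀ w ∈ Binf d κ, Integrable (fun ξ => F w ξ) μξ) :
    ∀ w ∈ Binf d β, ∀ G : EuclideanSpace ℝ (Fin d),
      HasGradientAt (smoothed α (fbar μξ F)) G w →
      G ∈ closure (convexHull ℝ
        {g : EuclideanSpace ℝ (Fin d) |
          ∃ x ∈ Metric.closedBall w (Real.sqrt d * (α / 2)),
            DifferentiableAt ℝ (fbar μξ F) x ∧ g = gradient (fbar μξ F) x}) := by
  intro w hw G hG
  set ρ := √d * (α / 2)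
  have := isProbabilityMeasure_unifMeas d (half_pos hα)
  have hL0 : Integrable L0 μξ :=
    ((memLp_two_iff_integrable_sq hL0meas.aestronglyMeasurable).2 hL0sq).integrable one_le_two
  obtain ⟨g, hg, hfg⟩ := (lipschitzOnWith_fbar hL0 hlip hFint).extend_real
  have hsupp : ∀ u ∈ Binf d (α / 2), ‖u‖ ≤ ρ := fun u ↦ norm_le_of_mem_Binf (by positivity)
  have hsm : smoothed α (fbar μξ F) =ᶠ[𝓝 w] smoothed α g := by
    filter_upwards [Binf_mem_nhds hw (by linarith : β < κ - ρ)] with z hz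
    refine integral_congr_ae ((ae_mem_unifMeas d _).mono fun u hu ↦ hfg ?_)
    simpa using add_mem_Binf hz (mem_Binf_of_norm_le (hsupp u hu))
  obtain ⟨hint, hgrad⟩ := hg.hasGradientAt_integral_comp_add (unifMeas_absolutelyContinuous d _)
    (integrable_unifMeas_of_continuous (half_pos hα) (hg.continuous.comp (continuous_const_add w)))
  rw [(hG.congr_of_eventuallyEq hsm.symm).unique hgrad]
  refine Convex.integral_mem (convex_convexHull ℝ _).closure isClosed_closure ?_ hint
  filter_upwards [ae_mem_unifMeas d (α / 2),
    hg.ae_differentiableAt_add (unifMeas_absolutelyContinuous d _) w] with u hu hdiff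
  have hfg_near : fbar μξ F =ᶠ[𝓝 (w + u)] g :=
    eventually_of_mem (Binf_mem_nhds (add_mem_Binf hw (mem_Binf_of_norm_le (hsupp u hu))) hκ)
      fun _ hz ↦ hfg hz
  refine subset_closure (subset_convexHull ℝ _
    ⟨w + u, ?_, hfg_near.differentiableAt_iff.2 hdiff, hfg_near.gradient_eq.symm⟩)
  simpa [Metric.mem_closedBall, dist_eq_norm] using hsupp u hu

/-- Assume `κ > β + √d·α/2`. Then for all `w ∈ B̄_β`, any gradient `G` of the
smoothed function `f_α` at `w` satisfies
`G ∈ closure (convexHull {∇f(x) : x ∈ B̄(w, √d·α/2), f differentiable at x})`,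
where `B̄(w,r)` is the closed Euclidean ball of radius `r` centered at `w`. -/
theorem smoothed_gradient_mem_clarke_eps_subdifferential
    (d p : ℕ) (α β κ : ℝ) (hα : 0 < α) (hβ : 0 < β)
    (hκ : β + Real.sqrt d * (α / 2) < κ)
    (μξ : Measure (EuclideanSpace ℝ (Fin p))) [IsProbabilityMeasure μξ]
    (F : EuclideanSpace ℝ (Fin d) → EuclideanSpace ℝ (Fin p) → ℝ)
    (hFmeas : Measurable (Function.uncurry F))
    (hFcont : ∀ ξ, ContinuousOn (fun w => F w ξ) (Binf d κ))
    (L0 : EuclideanSpace ℝ (Fin p) → ℝ) (hL0meas : Measurable L0)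
    (hL0sq : Integrable (fun ξ => (L0 ξ) ^ 2) μξ)
    (hlip : ∀ᵐ ξ ∂μξ, ∀ w ∈ Binf d κ, ∀ w' ∈ Binf d κ,
      |F w ξ - F w' ξ| ≤ L0 ξ * ‖w - w'‖)
    (hFint : ∀ w ∈ Binf d κ, Integrable (fun ξ => F w ξ) μξ) :
    ∀ w ∈ Binf d β, ∀ G : EuclideanSpace ℝ (Fin d),
      HasGradientAt (smoothed α (fbar μξ F)) G w →
      G ∈ closure (convexHull ℝ
        {g : EuclideanSpace ℝ (Fin d) |
          ∃ x ∈ Metric.closedBall w (Real.sqrt d * (α / 2)),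
            DifferentiableAt ℝ (fbar μξ F) x ∧ g = gradient (fbar μξ F) x}) :=
  smoothed_gradient_mem_clarke_eps_subdifferential_general d p α β κ hα hκ μξ F L0 hL0meas hL0sq
    hlip hFint
end
end

section
/- The gradient ∇f_α of the smoothed function is 2α^{-1}·√d·L₀-Lipschitz continuous on the closed l∞-ball B̄_β, i.e. ‖∇f_α(w) − ∇f_α(w′)‖₂ ≤ 2α^{-1}√d L₀ ‖w − w′‖₂ for all w, w′ ∈ B̄_β, where L₀ := E[L₀(ξ)]. -/
/-!
Put `z = w' - w`. The function `g x = f_α x - f_α (x + z)` has gradient `G - G'` at `w`, so it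
suffices to show that `g` is `2α⁻¹√d L₀‖z‖`-Lipschitz near `w`. Now `g x` is the average of
`h y = f y - f (y + z)` over the cube of side `α` centred at `x`, and `|h| ≤ L₀‖z‖` there. Moving
the cube from `x` to `x'` changes the integral of `h` by at most `L₀‖z‖` times the volume of the
symmetric difference of the two cubes, which is at most `2α^(d-1) ∑ i, |x i - x' i|`, and
`∑ i, |x i - x' i| ≤ √d ‖x - x'‖`.
-/

open MeasureTheory Filter
open scoped Classical BigOperators

noncomputable section

open Set Function Metric Topology
open scoped NNReal ENNReal

section Gradient

variable {𝕜 F : Type*} [RCLike 𝕜] [NormedAddCommGroup F] [InnerProductSpace 𝕜 F] [CompleteSpace F]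
  {f g : F → 𝕜} {f' g' x z : F}

theorem HasGradientAt.sub (hf : HasGradientAt f f' x) (hg : HasGradientAt g g' x) :
    HasGradientAt (fun y => f y - g y) (f' - g') x := by
  rw [hasGradientAt_iff_hasFDerivAt, map_sub]
  exact hf.hasFDerivAt.sub hg.hasFDerivAt

theorem HasGradientAt.comp_add_right (hf : HasGradientAt f f' (x + z)) :
    HasGradientAt (fun y => f (y + z)) f' x :=
  (hasFDerivAt_comp_add_right z).2 hf.hasFDerivAt

theorem HasGradientAt.norm_le_of_lip' (hf : HasGradientAt f f' x) {C : ℝ} (hC : 0 ≤ C)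
    (hlip : ∀ᶠ y in 𝓝 x, ‖f y - f x‖ ≤ C * ‖y - x‖) : ‖f'‖ ≤ C := by
  simpa using hf.hasFDerivAt.le_of_lip' hC hlip

end Gradient

namespace RandomizedSmoothing

theorem abs_setIntegral_sub_setIntegral_le {X : Type*} [MeasurableSpace X] {μ : Measure X}
    {s t : Set X} {f : X → ℝ} {M : ℝ} (hs : MeasurableSet s) (ht : MeasurableSet t)
    (hfs : IntegrableOn f s μ) (hft : IntegrableOn f t μ) (hμs : μ s ≠ ∞) (hμt : μ t ≠ ∞)
    (hM : ∀ x ∈ s ∪ t, |f x| ≤ M) :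
    |∫ x in s, f x ∂μ - ∫ x in t, f x ∂μ| ≤ M * (μ.real (s \ t) + μ.real (t \ s)) := by
  have hsplit : ∫ x in s, f x ∂μ - ∫ x in t, f x ∂μ =
      ∫ x in s \ t, f x ∂μ - ∫ x in t \ s, f x ∂μ := by
    rw [← integral_inter_add_sdiff ht hfs, ← integral_inter_add_sdiff hs hft, inter_comm]; ring
  have hbound : ∀ u v, u ⊆ s ∪ t → μ u ≠ ∞ → ‖∫ x in u \ v, f x ∂μ‖ ≤ M * μ.real (u \ v) :=
    fun u v hu hμu => norm_setIntegral_le_of_norm_le_const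
      ((measure_mono sdiff_subset).trans_lt hμu.lt_top) fun x hx => hM x (hu hx.1)
  rw [hsplit, mul_add]
  exact (abs_sub _ _).trans (add_le_add (hbound s t subset_union_left hμs)
    (hbound t s subset_union_right hμt))

theorem volume_Icc_sdiff_Icc_le (a b r : ℝ) :
    volume (Icc (a - r) (a + r) \ Icc (b - r) (b + r)) ≤ ENNReal.ofReal |a - b| := by
  rcases le_total a b with h | h
  · calc _ ≤ volume (Ico (a - r) (b - r)) := measure_mono <| by
          rintro y ⟨⟨h1, h2⟩, h3⟩; exact ⟨h1, not_le.1 fun h4 => h3 ⟨h4, by linarith⟩⟩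
      _ = _ := by rw [Real.volume_Ico, abs_of_nonpos (by linarith)]; ring_nf
  · calc _ ≤ volume (Ioc (b + r) (a + r)) := measure_mono <| by
          rintro y ⟨⟨h1, h2⟩, h3⟩; exact ⟨not_le.1 fun h4 => h3 ⟨by linarith, h4⟩, h2⟩
      _ = _ := by rw [Real.volume_Ioc, abs_of_nonneg (by linarith)]; ring_nf

theorem ofReal_mul_volume_pi_Icc_sdiff_le {ι : Type*} [Fintype ι] (a b : ι → ℝ) {r : ℝ}
    (hr : 0 ≤ r) :
    ENNReal.ofReal (2 * r) * volume ((univ.pi fun i => Icc (a i - r) (a i + r)) \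
      univ.pi fun i => Icc (b i - r) (b i + r)) ≤
      ENNReal.ofReal ((2 * r) ^ Fintype.card ι * ∑ i, |a i - b i|) := by
  set S : ι → Set ℝ := fun i => Icc (a i - r) (a i + r)
  have hS : ∀ i, volume (S i) = ENNReal.ofReal (2 * r) := fun i => by
    rw [Real.volume_Icc]; ring_nf
  have hcover : (univ.pi S \ univ.pi fun i => Icc (b i - r) (b i + r)) ⊆
      ⋃ i, univ.pi (update S i (S i \ Icc (b i - r) (b i + r))) := by
    rintro y ⟨hya, hyb⟩
    obtain ⟨i, -, hi⟩ := not_forall₂.1 hyb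
    refine mem_iUnion.2 ⟨i, fun j _ => ?_⟩
    rcases eq_or_ne j i with rfl | hj
    · rw [update_self]; exact ⟨hya j trivial, hi⟩
    · rw [update_of_ne hj]; exact hya j trivial
  have hpiece : ∀ i, ENNReal.ofReal (2 * r) *
      volume (univ.pi (update S i (S i \ Icc (b i - r) (b i + r)))) ≤
      ENNReal.ofReal |a i - b i| * ENNReal.ofReal ((2 * r) ^ Fintype.card ι) := by
    intro i
    rw [volume_pi_pi, Finset.prod_congr rfl fun j _ => apply_update (fun _ => volume) S i _ j,
      Finset.prod_update_of_mem (Finset.mem_univ i), mul_left_comm]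
    -- the factor `2 * r` restores the side of the box missing from the product
    rw [← hS i, Finset.sdiff_singleton_eq_erase,
      Finset.mul_prod_erase _ (fun j => volume (S j)) (Finset.mem_univ i)]
    simp only [hS, Finset.prod_const, Finset.card_univ,
      ← ENNReal.ofReal_pow (by positivity : 0 ≤ 2 * r)]
    gcongr
    exact volume_Icc_sdiff_Icc_le _ _ _
  calc _ ≤ ENNReal.ofReal (2 * r) *
        ∑ i, volume (univ.pi (update S i (S i \ Icc (b i - r) (b i + r)))) :=
        mul_le_mul_right ((measure_mono hcover).trans (measure_iUnion_fintype_le _ _)) _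
    _ ≤ ∑ i, ENNReal.ofReal |a i - b i| * ENNReal.ofReal ((2 * r) ^ Fintype.card ι) := by
        rw [Finset.mul_sum]; exact Finset.sum_le_sum fun i _ => hpiece i
    _ = _ := by
        rw [← Finset.sum_mul, ← ENNReal.ofReal_sum_of_nonneg fun i _ => abs_nonneg _,
          ← ENNReal.ofReal_mul (Finset.sum_nonneg fun i _ => abs_nonneg _), mul_comm]

theorem sum_abs_le_sqrt_card_mul_norm {ι : Type*} [Fintype ι] (v : EuclideanSpace ℝ ι) :
    ∑ i, |v i| ≤ √(Fintype.card ι) * ‖v‖ := by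
  simpa [EuclideanSpace.norm_eq] using Real.sum_mul_le_sqrt_mul_sqrt Finset.univ 1 fun i => |v i|

section Cube

variable {ι : Type*}

def cube (x : EuclideanSpace ℝ ι) (r : ℝ) : Set (EuclideanSpace ℝ ι) :=
  {y | ∀ i, |y i - x i| ≤ r}

theorem Binf_eq_cube (d : ℕ) (r : ℝ) : Binf d r = cube 0 r := by
  ext y; simp [Binf, cube]

theorem mem_cube_self (x : EuclideanSpace ℝ ι) {r : ℝ} (hr : 0 ≤ r) : x ∈ cube x r := by
  simp [cube, hr]

theorem cube_eq_preimage (x : EuclideanSpace ℝ ι) (r : ℝ) :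
    cube x r = WithLp.ofLp ⁻¹' univ.pi fun i => Icc (x i - r) (x i + r) := by
  ext y
  simp only [cube, mem_ofPred_eq, mem_preimage, mem_univ_pi, mem_Icc, abs_sub_le_iff]
  exact forall_congr' fun i => by constructor <;> intro h <;> constructor <;> linarith [h.1, h.2]

theorem isCompact_cube [Fintype ι] (x : EuclideanSpace ℝ ι) (r : ℝ) : IsCompact (cube x r) := by
  rw [cube_eq_preimage]
  exact (PiLp.homeomorph 2 _).isCompact_preimage.2 (isCompact_univ_pi fun _ => isCompact_Icc)

theorem measurableSet_cube [Fintype ι] (x : EuclideanSpace ℝ ι) (r : ℝ) :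
    MeasurableSet (cube x r) :=
  (isCompact_cube x r).isClosed.measurableSet

theorem volume_cube [Fintype ι] (x : EuclideanSpace ℝ ι) {r : ℝ} (hr : 0 ≤ r) :
    volume (cube x r) = ENNReal.ofReal ((2 * r) ^ Fintype.card ι) := by
  rw [cube_eq_preimage,
    (PiLp.volume_preserving_ofLp ι).measure_preimage
      (MeasurableSet.univ_pi fun _ => measurableSet_Icc).nullMeasurableSet,
    volume_pi_pi, ENNReal.ofReal_pow (by positivity), ← Finset.card_univ, ← Finset.prod_const]
  congr! with i
  rw [Real.volume_Icc]; ring_nf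

theorem volume_real_cube_sdiff_le [Fintype ι] (a b : EuclideanSpace ℝ ι) {r : ℝ} (hr : 0 ≤ r) :
    2 * r * volume.real (cube a r \ cube b r) ≤ (2 * r) ^ Fintype.card ι * ∑ i, |a i - b i| := by
  have hmeas : MeasurableSet ((univ.pi fun i => Icc (a i - r) (a i + r)) \
      univ.pi fun i => Icc (b i - r) (b i + r)) :=
    (MeasurableSet.univ_pi fun _ => measurableSet_Icc).diff
      (MeasurableSet.univ_pi fun _ => measurableSet_Icc)
  have h := ofReal_mul_volume_pi_Icc_sdiff_le a b hr
  rw [cube_eq_preimage, cube_eq_preimage, ← preimage_sdiff, measureReal_def,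
    (PiLp.volume_preserving_ofLp ι).measure_preimage hmeas.nullMeasurableSet]
  have := ENNReal.toReal_mono ENNReal.ofReal_ne_top h
  rwa [ENNReal.toReal_mul, ENNReal.toReal_ofReal (by positivity),
    ENNReal.toReal_ofReal (by positivity)] at this

theorem setIntegral_cube [Fintype ι] (f : EuclideanSpace ℝ ι → ℝ) (x : EuclideanSpace ℝ ι)
    (r : ℝ) :
    ∫ y in cube x r, f y = ∫ u in cube 0 r, f (x + u) := by
  rw [← (measurePreserving_add_left volume x).setIntegral_preimage_emb
    (measurableEmbedding_addLeft x)]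
  congr 2
  ext u
  simp [cube]

end Cube

section Smoothing

variable {d : ℕ} {α : ℝ}

theorem smoothed_eq_setIntegral_cube (hα : 0 < α) (f : EuclideanSpace ℝ (Fin d) → ℝ)
    (x : EuclideanSpace ℝ (Fin d)) :
    smoothed α f x = (α ^ d)⁻¹ * ∫ y in cube x (α / 2), f y := by
  rw [smoothed, unifMeas, integral_smul_measure, Binf_eq_cube, volume_cube 0 (by positivity),
    setIntegral_cube f x, Fintype.card_fin, ENNReal.toReal_inv,
    ENNReal.toReal_ofReal (by positivity), smul_eq_mul]
  ring_nf

theorem integrable_unifMeas {r : ℝ} (hr : 0 < r) {f : EuclideanSpace ℝ (Fin d) → ℝ}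
    {x : EuclideanSpace ℝ (Fin d)} (hf : ContinuousOn f (cube x r)) :
    Integrable (fun u => f (x + u)) (unifMeas d r) := by
  have hvol : volume (Binf d r) ≠ 0 := by
    rw [Binf_eq_cube, volume_cube 0 hr.le]; positivity
  refine Integrable.smul_measure ?_ (ENNReal.inv_ne_top.2 hvol)
  rw [Binf_eq_cube]
  refine (hf.comp (continuous_const_add x).continuousOn fun u hu i => ?_).integrableOn_compact
    (isCompact_cube 0 r)
  simpa using hu i

theorem smoothed_sub_smoothed_add (hα : 0 < α) {f : EuclideanSpace ℝ (Fin d) → ℝ}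
    {x z : EuclideanSpace ℝ (Fin d)} (hx : ContinuousOn f (cube x (α / 2)))
    (hxz : ContinuousOn f (cube (x + z) (α / 2))) :
    smoothed α f x - smoothed α f (x + z) = smoothed α (fun y => f y - f (y + z)) x := by
  rw [smoothed, smoothed, ← integral_sub (integrable_unifMeas (by positivity) hx)
    (integrable_unifMeas (by positivity) hxz)]
  simp_rw [smoothed, add_right_comm x z]

theorem abs_smoothed_sub_smoothed_le (hα : 0 < α) {h : EuclideanSpace ℝ (Fin d) → ℝ} {M : ℝ}
    {a b : EuclideanSpace ℝ (Fin d)} (hc : ContinuousOn h (cube a (α / 2) ∪ cube b (α / 2)))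
    (hM : ∀ y ∈ cube a (α / 2) ∪ cube b (α / 2), |h y| ≤ M) :
    |smoothed α h a - smoothed α h b| ≤ 2 * α⁻¹ * M * ∑ i, |a i - b i| := by
  have hM0 : 0 ≤ M := (abs_nonneg _).trans (hM a (Or.inl (mem_cube_self a (by positivity))))
  have hvol : ∀ a b : EuclideanSpace ℝ (Fin d),
      volume.real (cube a (α / 2) \ cube b (α / 2)) ≤ α ^ d / α * ∑ i, |a i - b i| := by
    intro a b
    have := volume_real_cube_sdiff_le a b (r := α / 2) (by positivity)
    rw [mul_div_cancel₀ _ two_ne_zero, Fintype.card_fin] at this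
    rwa [div_mul_eq_mul_div, le_div_iff₀ hα, mul_comm]
  have hsymm : ∑ i, |b i - a i| = ∑ i, |a i - b i| :=
    Finset.sum_congr rfl fun i _ => abs_sub_comm _ _
  have hfin : ∀ x : EuclideanSpace ℝ (Fin d), volume (cube x (α / 2)) ≠ ∞ := fun x => by
    rw [volume_cube x (by positivity)]; exact ENNReal.ofReal_ne_top
  rw [smoothed_eq_setIntegral_cube hα, smoothed_eq_setIntegral_cube hα, ← mul_sub, abs_mul,
    abs_inv, abs_of_pos (pow_pos hα d)]
  calc (α ^ d)⁻¹ * |(∫ y in cube a (α / 2), h y) - ∫ y in cube b (α / 2), h y|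
      ≤ (α ^ d)⁻¹ * (M * (volume.real (cube a (α / 2) \ cube b (α / 2)) +
          volume.real (cube b (α / 2) \ cube a (α / 2)))) := by
        gcongr
        exact abs_setIntegral_sub_setIntegral_le (measurableSet_cube _ _) (measurableSet_cube _ _)
          ((hc.mono subset_union_left).integrableOn_compact (isCompact_cube _ _))
          ((hc.mono subset_union_right).integrableOn_compact (isCompact_cube _ _))
          (hfin a) (hfin b) hM
    _ ≤ (α ^ d)⁻¹ * (M * (α ^ d / α * ∑ i, |a i - b i| + α ^ d / α * ∑ i, |a i - b i|)) := by
        gcongr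
        · exact hvol a b
        · exact hsymm ▸ hvol b a
    _ = 2 * α⁻¹ * M * ∑ i, |a i - b i| := by
        field_simp
        ring

theorem cube_subset_Binf {κ r : ℝ} {x : EuclideanSpace ℝ (Fin d)} (hx : x ∈ Binf d (κ - r)) :
    cube x r ⊆ Binf d κ := fun y hy i => by
  linarith [abs_sub_abs_le_abs_sub (y i) (x i), hy i, hx i]

theorem abs_smoothed_translate_sub_le (hα : 0 < α) {f : EuclideanSpace ℝ (Fin d) → ℝ}
    {K : ℝ≥0} {κ : ℝ} (hf : LipschitzOnWith K f (Binf d κ)) {a b z : EuclideanSpace ℝ (Fin d)}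
    (ha : a ∈ Binf d (κ - α / 2)) (hb : b ∈ Binf d (κ - α / 2))
    (haz : a + z ∈ Binf d (κ - α / 2)) (hbz : b + z ∈ Binf d (κ - α / 2)) :
    |(smoothed α f a - smoothed α f (a + z)) - (smoothed α f b - smoothed α f (b + z))| ≤
      2 * α⁻¹ * (K * ‖z‖) * ∑ i, |a i - b i| := by
  set U := cube a (α / 2) ∪ cube b (α / 2)
  have hU : U ⊆ Binf d κ := union_subset (cube_subset_Binf ha) (cube_subset_Binf hb)
  have hshift : ∀ x, cube x (α / 2) ⊆ (· + z) ⁻¹' cube (x + z) (α / 2) := fun x y hy i => by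
    simpa using hy i
  have hUz : MapsTo (· + z) U (Binf d κ) :=
    union_subset ((hshift a).trans (preimage_mono (cube_subset_Binf haz)))
      ((hshift b).trans (preimage_mono (cube_subset_Binf hbz)))
  have hfc := hf.continuousOn
  rw [smoothed_sub_smoothed_add hα (hfc.mono (cube_subset_Binf ha))
      (hfc.mono (cube_subset_Binf haz)),
    smoothed_sub_smoothed_add hα (hfc.mono (cube_subset_Binf hb))
      (hfc.mono (cube_subset_Binf hbz))]
  refine abs_smoothed_sub_smoothed_le hα
    ((hfc.mono hU).sub (hfc.comp (continuous_add_const z).continuousOn hUz)) fun y hy => ?_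
  simpa [Real.dist_eq] using hf.dist_le_mul y (hU hy) (y + z) (hUz hy)

theorem ball_subset_Binf {β γ : ℝ} {w : EuclideanSpace ℝ (Fin d)} (hw : w ∈ Binf d β) :
    ball w (γ - β) ⊆ Binf d γ := fun x hx i => by
  have h := PiLp.norm_apply_le (x - w) i
  rw [← dist_eq_norm, PiLp.sub_apply, Real.norm_eq_abs] at h
  linarith [abs_sub_abs_le_abs_sub (x i) (w i), hw i, mem_ball.1 hx]

theorem eventually_norm_smoothed_translate_sub_le (hα : 0 < α)
    {f : EuclideanSpace ℝ (Fin d) → ℝ} {K : ℝ≥0} {β κ : ℝ} (hf : LipschitzOnWith K f (Binf d κ))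
    (hκ : β + α / 2 < κ)
    {w z : EuclideanSpace ℝ (Fin d)} (hw : w ∈ Binf d β) (hwz : w + z ∈ Binf d β) :
    ∀ᶠ x in 𝓝 w, ‖(smoothed α f x - smoothed α f (x + z)) -
      (smoothed α f w - smoothed α f (w + z))‖ ≤ 2 * α⁻¹ * (K * ‖z‖) * √d * ‖x - w‖ := by
  have hδ : 0 < κ - α / 2 - β := by linarith
  have hball : ∀ {v}, v ∈ Binf d β → ball v (κ - α / 2 - β) ⊆ Binf d (κ - α / 2) :=
    fun hv => ball_subset_Binf hv
  filter_upwards [ball_mem_nhds w hδ] with x hx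
  have hxz : x + z ∈ ball (w + z) (κ - α / 2 - β) := by rwa [mem_ball, dist_add_right]
  calc _ ≤ 2 * α⁻¹ * (K * ‖z‖) * ∑ i, |x i - w i| := by
        rw [Real.norm_eq_abs]
        exact abs_smoothed_translate_sub_le hα hf (hball hw hx) (hball hw (mem_ball_self hδ))
          (hball hwz hxz) (hball hwz (mem_ball_self hδ))
    _ ≤ 2 * α⁻¹ * (K * ‖z‖) * (√d * ‖x - w‖) := by
        gcongr
        simpa using sum_abs_le_sqrt_card_mul_norm (x - w)
    _ = _ := by ring

end Smoothing

theorem dist_fbar_le {d p : ℕ} {μ : Measure (EuclideanSpace ℝ (Fin p))}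
    {F : EuclideanSpace ℝ (Fin d) → EuclideanSpace ℝ (Fin p) → ℝ}
    {L0 : EuclideanSpace ℝ (Fin p) → ℝ} {s : Set (EuclideanSpace ℝ (Fin d))}
    (hFint : ∀ w ∈ s, Integrable (fun ξ => F w ξ) μ) (hL0 : Integrable L0 μ)
    (hlip : ∀ᵐ ξ ∂μ, ∀ w ∈ s, ∀ w' ∈ s, |F w ξ - F w' ξ| ≤ L0 ξ * ‖w - w'‖)
    {w w' : EuclideanSpace ℝ (Fin d)} (hw : w ∈ s) (hw' : w' ∈ s) :
    dist (fbar μ F w) (fbar μ F w') ≤ (∫ ξ, L0 ξ ∂μ) * dist w w' := by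
  rw [Real.dist_eq, dist_eq_norm, fbar, fbar, ← integral_sub (hFint w hw) (hFint w' hw'),
    ← integral_mul_const]
  refine abs_integral_le_integral_abs.trans <| integral_mono_ae
    ((hFint w hw).sub (hFint w' hw')).abs (hL0.mul_const _) ?_
  filter_upwards [hlip] with ξ hξ using hξ w hw w' hw'

end RandomizedSmoothing

open RandomizedSmoothing in
theorem smoothed_gradient_lipschitz_general
    (d p : ℕ) (α β κ : ℝ) (hα : 0 < α) (hκ : β + α / 2 < κ)
    (μξ : Measure (EuclideanSpace ℝ (Fin p))) [IsProbabilityMeasure μξ]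
    (F : EuclideanSpace ℝ (Fin d) → EuclideanSpace ℝ (Fin p) → ℝ)
    (L0 : EuclideanSpace ℝ (Fin p) → ℝ) (hL0meas : Measurable L0)
    (hL0sq : Integrable (fun ξ => (L0 ξ) ^ 2) μξ)
    (hlip : ∀ᵐ ξ ∂μξ, ∀ w ∈ Binf d κ, ∀ w' ∈ Binf d κ,
      |F w ξ - F w' ξ| ≤ L0 ξ * ‖w - w'‖)
    (hFint : ∀ w ∈ Binf d κ, Integrable (fun ξ => F w ξ) μξ)
    :
    ∀ w ∈ Binf d β, ∀ w' ∈ Binf d β, ∀ G G' : EuclideanSpace ℝ (Fin d),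
      HasGradientAt (smoothed α (fbar μξ F)) G w →
      HasGradientAt (smoothed α (fbar μξ F)) G' w' →
      ‖G - G'‖ ≤ 2 * α⁻¹ * Real.sqrt d * (∫ ξ, L0 ξ ∂μξ) * ‖w - w'‖ := by
  intro w hw w' hw' G G' hG hG'
  rcases eq_or_ne w w' with rfl | hww
  · simp [hG.unique hG']
  have hL0 : Integrable L0 μξ :=
    ((memLp_two_iff_integrable_sq hL0meas.aestronglyMeasurable).2 hL0sq).integrable one_le_two
  have hf : ∀ x ∈ Binf d κ, ∀ y ∈ Binf d κ,
      dist (fbar μξ F x) (fbar μξ F y) ≤ (∫ ξ, L0 ξ ∂μξ) * dist x y :=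
    fun x hx y hy => dist_fbar_le hFint hL0 hlip hx hy
  have hβκ : Binf d β ⊆ Binf d κ := fun x hx i => (hx i).trans (by linarith)
  have hL : 0 ≤ ∫ ξ, L0 ξ ∂μξ :=
    nonneg_of_mul_nonneg_left (dist_nonneg.trans (hf w (hβκ hw) w' (hβκ hw'))) (dist_pos.2 hww)
  obtain ⟨z, rfl⟩ : ∃ z, w' = w + z := ⟨w' - w, by abel⟩
  have hgrad := (hG.sub hG'.comp_add_right).norm_le_of_lip' (by positivity)
    (eventually_norm_smoothed_translate_sub_le hα (LipschitzOnWith.of_dist_le' hf) hκ hw hw')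
  rw [Real.coe_toNNReal _ hL] at hgrad
  calc ‖G - G'‖ ≤ _ := hgrad
    _ = _ := by rw [norm_sub_rev, add_sub_cancel_left]; ring

/-- The gradient of the smoothed function `f_α` is `2α⁻¹√d·L₀`-Lipschitz
continuous on `B̄_β`: for `w, w′ ∈ B̄_β` and gradients `G, G′` of `f_α` at `w, w′` respectively,
`‖G − G′‖₂ ≤ 2α⁻¹√d L₀ ‖w − w′‖₂`, where `L₀ := E[L₀(ξ)]`. -/
theorem smoothed_gradient_lipschitz
    (d p : ℕ) (α β κ : ℝ) (hα : 0 < α) (hβ : 0 < β) (hκ : β + α / 2 < κ)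
    (μξ : Measure (EuclideanSpace ℝ (Fin p))) [IsProbabilityMeasure μξ]
    (F : EuclideanSpace ℝ (Fin d) → EuclideanSpace ℝ (Fin p) → ℝ)
    (hFmeas : Measurable (Function.uncurry F))
    (hFcont : ∀ ξ, ContinuousOn (fun w => F w ξ) (Binf d κ))
    (L0 : EuclideanSpace ℝ (Fin p) → ℝ) (hL0meas : Measurable L0)
    (hL0sq : Integrable (fun ξ => (L0 ξ) ^ 2) μξ)
    (hlip : ∀ᵐ ξ ∂μξ, ∀ w ∈ Binf d κ, ∀ w' ∈ Binf d κ,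
      |F w ξ - F w' ξ| ≤ L0 ξ * ‖w - w'‖)
    (hFint : ∀ w ∈ Binf d κ, Integrable (fun ξ => F w ξ) μξ)
    :
    ∀ w ∈ Binf d β, ∀ w' ∈ Binf d β, ∀ G G' : EuclideanSpace ℝ (Fin d),
      HasGradientAt (smoothed α (fbar μξ F)) G w →
      HasGradientAt (smoothed α (fbar μξ F)) G' w' →
      ‖G - G'‖ ≤ 2 * α⁻¹ * Real.sqrt d * (∫ ξ, L0 ξ ∂μξ) * ‖w - w'‖ :=
  smoothed_gradient_lipschitz_general d p α β κ hα hκ μξ F L0 hL0meas hL0sq hlip hFint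
end
end

section
/- For any w ∈ ℝ^d, let Z* be the set of optimal solutions of the 0-1 knapsack problem: maximize Σ_{i=1}^n z_i(‖w^i‖₂² − ‖max(|w^i| − β, 0)‖₂²) over z ∈ {0,1}^n subject to Σ_{i=1}^n z_i p_i ≤ m, where ‖max(|w^i| − β, 0)‖₂² := Σ_{j=1}^{d_i} (max(|w^i_j| − β, 0))². Then the set of Euclidean projections of w onto C ∩ B̄_β equals { x ∈ ℝ^d : there exists z* ∈ Z* such that for all i ∈ {1,…,n}, x^i_j = sgn(w^i_j)·min(|w^i_j|, β) for all j if z*_i = 1, and x^i = 0 if z*_i = 0 }. -/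
/-!
Clipping `w` to `[-β, β]` on the blocks selected by `z` and zeroing it elsewhere gives a point at
squared distance `‖w‖² - knapObjBeta z` from `w`. For any `y` in the box, this point built from the
block support of `y` is nearer to `w` than `y` is, with a Pythagorean margin equal to its squared
distance to `y`. Hence minimizing the distance over `C ∩ B̄_β` amounts to maximizing the knapsack
objective, and the margin forces every projection to be the clipped point of its own support.
-/

open MeasureTheory Filter
open scoped Classical BigOperators

noncomputable section

/-- The weighted group `l0`-norm constraint set
`C := {w : Σ_i p_i · 1_{w^i ≠ 0}(w) ≤ m}`, where the partition of coordinates into `n` blocks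
is encoded by `blk : Fin d → Fin n` (coordinate `j` belongs to block `blk j`). -/
def groupC (d n : ℕ) (blk : Fin d → Fin n) (p : Fin n → ℝ) (m : ℝ) :
    Set (EuclideanSpace ℝ (Fin d)) :=
  {w | (∑ i : Fin n, if ∃ j, blk j = i ∧ w j ≠ 0 then p i else 0) ≤ m}

/-- The objective value of the 0-1 knapsack problem associated with projecting `w`
onto `C ∩ B̄_β`: `Σ_i z_i (‖w^i‖₂² − ‖max(|w^i| − β, 0)‖₂²)`. -/
def knapObjBeta {d n : ℕ} (blk : Fin d → Fin n) (β : ℝ)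
    (w : EuclideanSpace ℝ (Fin d)) (z : Fin n → Bool) : ℝ :=
  ∑ i : Fin n, if z i then
    ((∑ j ∈ Finset.univ.filter (fun j => blk j = i), (w j) ^ 2) -
      ∑ j ∈ Finset.univ.filter (fun j => blk j = i), (max (|w j| - β) 0) ^ 2)
  else 0

/-- The nearest point to `a` in `[-β, β]`. -/
def clip (β a : ℝ) : ℝ := Real.sign a * min |a| β

lemma abs_clip_le {β : ℝ} (hβ : 0 ≤ β) (a : ℝ) : |clip β a| ≤ β := by
  rcases Real.sign_apply_eq a with h | h | h <;>
    simp [clip, h, hβ, abs_of_nonneg (le_min (abs_nonneg a) hβ)]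

/-- Pythagoras for the projection onto the interval `[-β, β]`. -/
lemma sq_sub_clip_add_sq_sub_clip_le {β a b : ℝ} (hb : |b| ≤ β) :
    (a - clip β a) ^ 2 + (clip β a - b) ^ 2 ≤ (a - b) ^ 2 := by
  obtain ⟨hb₁, hb₂⟩ := abs_le.1 hb
  rcases lt_trichotomy a 0 with ha | rfl | ha
  · rw [clip, Real.sign_of_neg ha, abs_of_neg ha]
    rcases le_total (-a) β with h | h
    · rw [min_eq_left h]; nlinarith
    · rw [min_eq_right h]; nlinarith
  · simp [clip]
  · rw [clip, Real.sign_of_pos ha, abs_of_pos ha]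
    rcases le_total a β with h | h
    · rw [min_eq_left h]; nlinarith
    · rw [min_eq_right h]; nlinarith

lemma sq_sub_clip {β : ℝ} (hβ : 0 ≤ β) (a : ℝ) :
    (a - clip β a) ^ 2 = max (|a| - β) 0 ^ 2 := by
  rcases lt_trichotomy a 0 with ha | rfl | ha
  · rw [clip, Real.sign_of_neg ha, abs_of_neg ha]
    rcases le_total (-a) β with h | h
    · rw [min_eq_left h, max_eq_right (by linarith)]; ring
    · rw [min_eq_right h, max_eq_left (by linarith)]; ring
  · simp [clip, hβ]
  · rw [clip, Real.sign_of_pos ha, abs_of_pos ha]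
    rcases le_total a β with h | h
    · rw [min_eq_left h, max_eq_right (by linarith)]; ring
    · rw [min_eq_right h, max_eq_left (by linarith)]; ring

lemma EuclideanSpace.norm_sq_eq_sum_sq {ι : Type*} [Fintype ι] (u : EuclideanSpace ℝ ι) :
    ‖u‖ ^ 2 = ∑ j, u j ^ 2 := by
  simp [EuclideanSpace.norm_sq_eq]

def knapWeight {n : ℕ} (p : Fin n → ℝ) (z : Fin n → Bool) : ℝ :=
  ∑ i, if z i then p i else 0

lemma knapWeight_mono {n : ℕ} {p : Fin n → ℝ} (hp : ∀ i, 0 ≤ p i) {z z' : Fin n → Bool}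
    (h : ∀ i, z i → z' i) : knapWeight p z ≤ knapWeight p z' := by
  refine Finset.sum_le_sum fun i _ => ?_
  by_cases hz : z i
  · simp [hz, h i hz]
  · simp only [hz, Bool.false_eq_true, if_false]
    split_ifs <;> simp [hp i]

section Blocks

variable {d n : ℕ} (blk : Fin d → Fin n)

def blockSupport (y : EuclideanSpace ℝ (Fin d)) (i : Fin n) : Bool :=
  decide (∃ j, blk j = i ∧ y j ≠ 0)

lemma eq_zero_of_not_blockSupport {y : EuclideanSpace ℝ (Fin d)} {j : Fin d}
    (h : ¬ blockSupport blk y (blk j)) : y j = 0 := by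
  by_contra hy
  exact h (decide_eq_true ⟨j, rfl, hy⟩)

lemma mem_groupC_iff {p : Fin n → ℝ} {m : ℝ} {y : EuclideanSpace ℝ (Fin d)} :
    y ∈ groupC d n blk p m ↔ knapWeight p (blockSupport blk y) ≤ m := by
  simp [groupC, knapWeight, blockSupport]

lemma knapObjBeta_eq_sum (β : ℝ) (w : EuclideanSpace ℝ (Fin d)) (z : Fin n → Bool) :
    knapObjBeta blk β w z =
      ∑ j, if z (blk j) then w j ^ 2 - max (|w j| - β) 0 ^ 2 else 0 := by
  rw [← Finset.sum_fiberwise Finset.univ blk, knapObjBeta]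
  refine Finset.sum_congr rfl fun i _ => ?_
  calc _ = ∑ j ∈ Finset.univ.filter (blk · = i),
        if z i then w j ^ 2 - max (|w j| - β) 0 ^ 2 else 0 := by
          rw [Finset.sum_ite_irrel, Finset.sum_const_zero, Finset.sum_sub_distrib]
    _ = _ := Finset.sum_congr rfl fun j hj => by rw [(Finset.mem_filter.1 hj).2]

variable (β : ℝ) (w : EuclideanSpace ℝ (Fin d))

def blockClip (z : Fin n → Bool) : EuclideanSpace ℝ (Fin d) :=
  WithLp.toLp 2 fun j => if z (blk j) then clip β (w j) else 0

lemma blockClip_apply (z : Fin n → Bool) (j : Fin d) :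
    blockClip blk β w z j = if z (blk j) then clip β (w j) else 0 := rfl

lemma blockClip_mem {p : Fin n → ℝ} (hp : ∀ i, 0 ≤ p i) {m : ℝ} (hβ : 0 ≤ β)
    {z : Fin n → Bool} (hz : knapWeight p z ≤ m) :
    blockClip blk β w z ∈ groupC d n blk p m ∩ Binf d β := by
  refine ⟨(mem_groupC_iff blk).2 <| le_trans (knapWeight_mono hp fun i hi => ?_) hz, fun j => ?_⟩
  · obtain ⟨j, rfl, hj⟩ := of_decide_eq_true hi
    by_contra hz
    exact hj (by simp [blockClip_apply, hz])
  · rw [blockClip_apply]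
    split_ifs
    · exact abs_clip_le hβ _
    · simpa using hβ

lemma norm_sub_blockClip_sq (hβ : 0 ≤ β) (z : Fin n → Bool) :
    ‖w - blockClip blk β w z‖ ^ 2 = ‖w‖ ^ 2 - knapObjBeta blk β w z := by
  rw [EuclideanSpace.norm_sq_eq_sum_sq, EuclideanSpace.norm_sq_eq_sum_sq, knapObjBeta_eq_sum,
    ← Finset.sum_sub_distrib]
  refine Finset.sum_congr rfl fun j _ => ?_
  simp only [PiLp.sub_apply, blockClip_apply]
  split_ifs
  · rw [sq_sub_clip hβ]; ring
  · ring

lemma norm_sub_blockClip_sq_add_le {z : Fin n → Bool} {y : EuclideanSpace ℝ (Fin d)}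
    (hyβ : y ∈ Binf d β) (hyz : ∀ j, ¬ z (blk j) → y j = 0) :
    ‖w - blockClip blk β w z‖ ^ 2 + ‖blockClip blk β w z - y‖ ^ 2 ≤ ‖w - y‖ ^ 2 := by
  simp only [EuclideanSpace.norm_sq_eq_sum_sq, ← Finset.sum_add_distrib, PiLp.sub_apply]
  refine Finset.sum_le_sum fun j _ => ?_
  rw [blockClip_apply]
  by_cases hz : z (blk j)
  · simpa [hz] using sq_sub_clip_add_sq_sub_clip_le (a := w j) (hyβ j)
  · simp [hz, hyz j hz]

lemma norm_sub_blockClip_blockSupport_le {y : EuclideanSpace ℝ (Fin d)} (hyβ : y ∈ Binf d β) :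
    ‖w - blockClip blk β w (blockSupport blk y)‖ ≤ ‖w - y‖ := by
  have := norm_sub_blockClip_sq_add_le blk β w hyβ fun j => eq_zero_of_not_blockSupport blk
  exact pow_le_pow_iff_left₀ (norm_nonneg _) (norm_nonneg _) two_ne_zero |>.1 <| by
    nlinarith [sq_nonneg ‖blockClip blk β w (blockSupport blk y) - y‖]

lemma blockClip_blockSupport_eq {y : EuclideanSpace ℝ (Fin d)} (hyβ : y ∈ Binf d β)
    (hy : ‖w - y‖ ≤ ‖w - blockClip blk β w (blockSupport blk y)‖) :
    blockClip blk β w (blockSupport blk y) = y := by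
  have := norm_sub_blockClip_sq_add_le blk β w hyβ fun j => eq_zero_of_not_blockSupport blk
  have hsq := pow_le_pow_left₀ (norm_nonneg _) hy 2
  rw [← sub_eq_zero, ← norm_eq_zero, ← sq_eq_zero_iff (M₀ := ℝ)]
  nlinarith [sq_nonneg ‖blockClip blk β w (blockSupport blk y) - y‖]

lemma norm_sub_blockClip_le_iff (hβ : 0 ≤ β) {z z' : Fin n → Bool} :
    ‖w - blockClip blk β w z‖ ≤ ‖w - blockClip blk β w z'‖ ↔
      knapObjBeta blk β w z' ≤ knapObjBeta blk β w z := by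
  rw [← pow_le_pow_iff_left₀ (norm_nonneg _) (norm_nonneg _) two_ne_zero,
    norm_sub_blockClip_sq blk β w hβ, norm_sub_blockClip_sq blk β w hβ, sub_le_sub_iff_left]

end Blocks

theorem projection_onto_C_inter_ball_general
    (d n : ℕ) (blk : Fin d → Fin n)
    (p : Fin n → ℝ) (hp : ∀ i, 0 < p i) (m : ℝ)
    (β : ℝ) (hβ : 0 < β) (w : EuclideanSpace ℝ (Fin d)) :
    {x : EuclideanSpace ℝ (Fin d) |
        x ∈ groupC d n blk p m ∩ Binf d β ∧
        ∀ y ∈ groupC d n blk p m ∩ Binf d β, ‖w - x‖ ≤ ‖w - y‖}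
      = {x : EuclideanSpace ℝ (Fin d) |
          ∃ z : Fin n → Bool,
            ((∑ i : Fin n, if z i then p i else 0) ≤ m ∧
              ∀ z' : Fin n → Bool, (∑ i : Fin n, if z' i then p i else 0) ≤ m →
                knapObjBeta blk β w z' ≤ knapObjBeta blk β w z) ∧
            ∀ j : Fin d,
              x j = if z (blk j) then Real.sign (w j) * min |w j| β else 0} := by
  ext x
  constructor
  · rintro ⟨⟨hxC, hxβ⟩, hmin⟩
    set z := blockSupport blk x
    have hz : knapWeight p z ≤ m := (mem_groupC_iff blk).1 hxC
    have hzmem z' (hz' : knapWeight p z' ≤ m) :=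
      blockClip_mem blk β w (fun i => (hp i).le) hβ.le hz'
    have hx : blockClip blk β w z = x :=
      blockClip_blockSupport_eq blk β w hxβ (hmin _ (hzmem z hz))
    refine ⟨z, ⟨hz, fun z' hz' => ?_⟩, fun j => by rw [← hx]; rfl⟩
    rw [← norm_sub_blockClip_le_iff blk β w hβ.le, hx]
    exact hmin _ (hzmem z' hz')
  · rintro ⟨z, ⟨hz, hopt⟩, hx⟩
    obtain rfl : x = blockClip blk β w z := PiLp.ext hx
    refine ⟨blockClip_mem blk β w (fun i => (hp i).le) hβ.le hz, fun y ⟨hyC, hyβ⟩ => ?_⟩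
    calc ‖w - blockClip blk β w z‖ ≤ ‖w - blockClip blk β w (blockSupport blk y)‖ :=
          (norm_sub_blockClip_le_iff blk β w hβ.le).2 (hopt _ ((mem_groupC_iff blk).1 hyC))
      _ ≤ ‖w - y‖ := norm_sub_blockClip_blockSupport_le blk β w hyβ

/-- The set of Euclidean projections of `w` onto `C ∩ B̄_β` equals the set of
points `x` obtained from some optimal solution `z*` of the 0-1 knapsack problem
`max Σ z_i (‖w^i‖₂² − ‖max(|w^i| − β,0)‖₂²)  s.t. Σ z_i p_i ≤ m` by setting, blockwise,
`x^i_j = sgn(w^i_j)·min(|w^i_j|, β)` when `z*_i = 1` and `x^i = 0` when `z*_i = 0`. -/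
theorem projection_onto_C_inter_ball
    (d n : ℕ) (blk : Fin d → Fin n) (hblk : Function.Surjective blk)
    (p : Fin n → ℝ) (hp : ∀ i, 0 < p i) (m : ℝ) (hm : 0 < m)
    (β : ℝ) (hβ : 0 < β) (w : EuclideanSpace ℝ (Fin d)) :
    {x : EuclideanSpace ℝ (Fin d) |
        x ∈ groupC d n blk p m ∩ Binf d β ∧
        ∀ y ∈ groupC d n blk p m ∩ Binf d β, ‖w - x‖ ≤ ‖w - y‖}
      = {x : EuclideanSpace ℝ (Fin d) |
          ∃ z : Fin n → Bool,
            ((∑ i : Fin n, if z i then p i else 0) ≤ m ∧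
              ∀ z' : Fin n → Bool, (∑ i : Fin n, if z' i then p i else 0) ≤ m →
                knapObjBeta blk β w z' ≤ knapObjBeta blk β w z) ∧
            ∀ j : Fin d,
              x j = if z (blk j) then Real.sign (w j) * min |w j| β else 0} :=
  projection_onto_C_inter_ball_general d n blk p hp m β hβ w
end
end
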